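/- arXiv:1805.00134 — 2 statements merged into one kernel-verified Lean document; each statement's English description precedes it below -/
import Mathlib

section
/- Let H be a real Hilbert space and let w : [0,∞) → H be twice continuously differentiable with (w''(z), w(z))_H ≥ 0 for all z > 0 and (w'(0), w(0))_H ≥ 0. If z ↦ ‖w(z)‖² is bounded on [0,∞), then w'(z) = 0 for all z ≥ 0. -/
/-!
Put `g = ⟪w', w⟫`. Then `g' = ‖w'‖² + ⟪w'', w⟫ ≥ ‖w'‖²`, so `g` is nondecreasing on `[0,∞)` and
`g ≥ g 0 ≥ 0` there. On the other hand `g` is half the derivative of `‖w‖²`, which is therefore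
convex on `[0,∞)`; being bounded, it is nonincreasing, so `g ≤ 0`. Hence `g ≡ 0` on `[0,∞)`,
which forces `‖w'‖² ≤ g' = 0` on `(0,∞)`, and `w' 0 = 0` follows by continuity.
-/

open RealInnerProductSpace Set Filter Topology

theorem deriv_nonpos_of_monotoneOn_deriv_of_bddAbove {f : ℝ → ℝ} {a x : ℝ}
    (hf : Differentiable ℝ f) (hmono : MonotoneOn (deriv f) (Ici a))
    (hbdd : BddAbove (f '' Ici a)) (hx : a ≤ x) : deriv f x ≤ 0 := by
  by_contra! hpos
  obtain ⟨M, hM⟩ := hbdd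
  have hslope : ∀ y ≥ x, deriv f x * (y - x) ≤ f y - f x := fun y hy =>
    (convex_Ici x).mul_sub_le_image_sub_of_le_deriv hf.continuous.continuousOn
      hf.differentiableOn (fun t ht => hmono hx (hx.trans (interior_subset ht : x ≤ t))
        (interior_subset ht)) x self_mem_Ici y hy hy
  set y := x + (M + 1 - f x) / deriv f x
  have hfx : f x ≤ M := hM (mem_image_of_mem f hx)
  have hxy : x ≤ y := le_add_of_nonneg_right (div_nonneg (by linarith) hpos.le)
  have hfy : f y ≤ M := hM (mem_image_of_mem f (hx.trans hxy))
  have hgrowth : deriv f x * (y - x) = M + 1 - f x := by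
    simp only [y, add_sub_cancel_left]
    field_simp
  linarith [hslope y hxy]

section

variable {H : Type*} [NormedAddCommGroup H] [InnerProductSpace ℝ H] {w : ℝ → H}

theorem deriv_norm_sq (hw : Differentiable ℝ w) (z : ℝ) :
    deriv (‖w ·‖ ^ 2) z = 2 * ⟪deriv w z, w z⟫ := by
  rw [(hw z).hasDerivAt.norm_sq.deriv, real_inner_comm]

theorem hasDerivAt_inner_deriv_self (hw : ContDiff ℝ 2 w) (z : ℝ) :
    HasDerivAt (fun t => ⟪deriv w t, w t⟫) (‖deriv w z‖ ^ 2 + ⟪deriv (deriv w) z, w z⟫) z := by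
  have hw' : Differentiable ℝ (deriv w) := (hw.iterate_deriv' 1 1).differentiable one_ne_zero
  simpa only [real_inner_self_eq_norm_sq] using
    (hw' z).hasDerivAt.inner ℝ ((hw.differentiable two_ne_zero) z).hasDerivAt

theorem monotoneOn_inner_deriv_self (hw : ContDiff ℝ 2 w)
    (hpos : ∀ z > (0 : ℝ), 0 ≤ ⟪deriv (deriv w) z, w z⟫) :
    MonotoneOn (fun t => ⟪deriv w t, w t⟫) (Ici 0) := by
  have hg := hasDerivAt_inner_deriv_self hw
  refine monotoneOn_of_deriv_nonneg (convex_Ici 0)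
    (fun z _ => (hg z).continuousAt.continuousWithinAt)
    (fun z _ => (hg z).differentiableAt.differentiableWithinAt) fun z hz => ?_
  rw [interior_Ici] at hz
  rw [(hg z).deriv]
  exact add_nonneg (sq_nonneg _) (hpos z hz)

theorem inner_deriv_self_nonpos_of_bddAbove (hw : Differentiable ℝ w) {a x : ℝ}
    (hmono : MonotoneOn (fun t => ⟪deriv w t, w t⟫) (Ici a))
    (hbdd : BddAbove ((‖w ·‖ ^ 2) '' Ici a)) (hx : a ≤ x) : ⟪deriv w x, w x⟫ ≤ 0 := by
  have hderiv : deriv (‖w ·‖ ^ 2) = fun t => 2 * ⟪deriv w t, w t⟫ := funext (deriv_norm_sq hw)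
  have hmono' : MonotoneOn (deriv (‖w ·‖ ^ 2)) (Ici a) := by
    rw [hderiv]
    exact fun s hs t ht hst => mul_le_mul_of_nonneg_left (hmono hs ht hst) zero_le_two
  have := deriv_nonpos_of_monotoneOn_deriv_of_bddAbove
    (fun z => (hw z).hasDerivAt.norm_sq.differentiableAt) hmono' hbdd hx
  rw [hderiv] at this
  linarith

theorem deriv_eq_zero_of_inner_deriv_self_eventuallyEq_zero (hw : ContDiff ℝ 2 w) {z : ℝ}
    (hg : (fun t => ⟪deriv w t, w t⟫) =ᶠ[𝓝 z] 0) (hz : 0 ≤ ⟪deriv (deriv w) z, w z⟫) :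
    deriv w z = 0 := by
  have hsum : ‖deriv w z‖ ^ 2 + ⟪deriv (deriv w) z, w z⟫ = 0 :=
    (hasDerivAt_inner_deriv_self hw z).unique ((hasDerivAt_const z 0).congr_of_eventuallyEq hg)
  have hsq : ‖deriv w z‖ ^ 2 = 0 := by linarith [sq_nonneg ‖deriv w z‖]
  simpa using hsq

end

theorem stmt3_general {H : Type*} [NormedAddCommGroup H] [InnerProductSpace ℝ H]
    (w : ℝ → H) (hw : ContDiff ℝ 2 w)
    (hpos : ∀ z > (0:ℝ), ⟪deriv (deriv w) z, w z⟫ ≥ 0)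
    (h0 : ⟪deriv w 0, w 0⟫ ≥ (0:ℝ))
    (M : ℝ) (hbd : ∀ z ≥ (0:ℝ), ‖w z‖ ^ 2 ≤ M) :
    ∀ z ≥ (0:ℝ), deriv w z = 0 := by
  have hmono := monotoneOn_inner_deriv_self hw hpos
  have hbdd : BddAbove ((‖w ·‖ ^ 2) '' Ici 0) := ⟨M, by rintro _ ⟨z, hz, rfl⟩; exact hbd z hz⟩
  have hg_zero : ∀ z ≥ (0 : ℝ), ⟪deriv w z, w z⟫ = 0 := fun z hz =>
    le_antisymm (inner_deriv_self_nonpos_of_bddAbove (hw.differentiable two_ne_zero) hmono hbdd hz)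
      (h0.trans (hmono self_mem_Ici hz hz))
  have hderiv_zero : EqOn (deriv w) 0 (Ioi 0) := fun z hz =>
    deriv_eq_zero_of_inner_deriv_self_eventuallyEq_zero hw
      (eventually_of_mem (Ioi_mem_nhds hz) fun t ht => hg_zero t (le_of_lt ht)) (hpos z hz)
  intro z hz
  exact (closure_Ioi (0 : ℝ) ▸ hderiv_zero.closure (hw.continuous_deriv one_le_two)
    continuous_const) hz

/-- If `w` is `C²` with `⟪w''(z), w(z)⟫ ≥ 0` for `z > 0`, `⟪w'(0), w(0)⟫ ≥ 0`, and
`z ↦ ‖w z‖²` is bounded on `[0,∞)`, then `w'(z) = 0` for all `z ≥ 0`. -/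
theorem stmt3 {H : Type*} [NormedAddCommGroup H] [InnerProductSpace ℝ H] [CompleteSpace H]
    (w : ℝ → H) (hw : ContDiff ℝ 2 w)
    (hpos : ∀ z > (0:ℝ), ⟪deriv (deriv w) z, w z⟫ ≥ 0)
    (h0 : ⟪deriv w 0, w 0⟫ ≥ (0:ℝ))
    (M : ℝ) (hbd : ∀ z ≥ (0:ℝ), ‖w z‖ ^ 2 ≤ M) :
    ∀ z ≥ (0:ℝ), deriv w z = 0 :=
  stmt3_general w hw hpos h0 M hbd
end

section
/- Let H be a real Hilbert space, v : (0,∞) → H twice differentiable with (v''(z), v(z))_H ≥ 0 for a.e. z > 0, (v'(z), v(z))_H ≤ 0 for all z ≥ 0, and v continuous at 0 with v, v' continuous on [0,∞). Then for all T > ε > 0: ∫_ε^T z‖v'(z)‖² dz ≤ T(v'(T), v(T)) − ε(v'(ε), v(ε)) + (1/2)‖v(ε)‖², and consequently ∫_0^∞ z‖v'(z)‖² dz ≤ (1/2)‖v(0)‖². -/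
open MeasureTheory RealInnerProductSpace Filter Set Topology

/-!
The function `φ z = z ⟪v' z, v z⟫ - ½ ‖v z‖²` has derivative `z ⟪v'' z, v z⟫ + z ‖v' z‖²`, whose
first term is a.e. nonnegative. Integrating over `[ε, T]` bounds `∫_ε^T z ‖v'‖²` by `φ T - φ ε`,
and `φ T ≤ T ⟪v' T, v T⟫ ≤ 0`. As `ε → 0⁺` the remaining bound `-ε ⟪v' ε, v ε⟫ + ½ ‖v ε‖²`
tends to `½ ‖v 0‖²` by continuity at `0`, while the intervals `(ε, T]` exhaust `(0, ∞)`.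
-/

section

variable {H : Type*} [NormedAddCommGroup H] [InnerProductSpace ℝ H] {v v' v'' : ℝ → H}

theorem hasDerivAt_mul_inner_sub_half_norm_sq {z : ℝ} (hv : HasDerivAt v (v' z) z)
    (hv' : HasDerivAt v' (v'' z) z) :
    HasDerivAt (fun z => z * ⟪v' z, v z⟫ - 1 / 2 * ‖v z‖ ^ 2)
      (z * ⟪v'' z, v z⟫ + z * ‖v' z‖ ^ 2) z := by
  refine (((hasDerivAt_id z).mul (hv'.inner ℝ hv)).sub
    (hv.norm_sq.const_mul (1 / 2))).congr_deriv ?_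
  rw [← real_inner_self_eq_norm_sq, real_inner_comm (v z)]
  simp only [id_eq]
  ring

theorem integral_mul_norm_sq_deriv_le {a b : ℝ} (hab : a ≤ b) (ha : 0 ≤ a)
    (hv : ∀ z ∈ Icc a b, HasDerivAt v (v' z) z) (hv' : ∀ z ∈ Icc a b, HasDerivAt v' (v'' z) z)
    (hint : IntervalIntegrable (fun z => z * ⟪v'' z, v z⟫) volume a b)
    (hsec : ∀ᵐ z ∂volume.restrict (Icc a b), 0 ≤ ⟪v'' z, v z⟫) :
    ∫ z in a..b, z * ‖v' z‖ ^ 2 ≤ b * ⟪v' b, v b⟫ - a * ⟪v' a, v a⟫ + 1 / 2 * ‖v a‖ ^ 2 := by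
  rw [← uIcc_of_le hab] at hv hv'
  have hv'_cont : ContinuousOn v' (uIcc a b) := fun z hz =>
    (hv' z hz).continuousAt.continuousWithinAt
  have hsq : IntervalIntegrable (fun z => z * ‖v' z‖ ^ 2) volume a b :=
    (continuousOn_id.mul (hv'_cont.norm.pow 2)).intervalIntegrable
  have hFTC := intervalIntegral.integral_eq_sub_of_hasDerivAt
    (fun z hz => hasDerivAt_mul_inner_sub_half_norm_sq (hv z hz) (hv' z hz)) (hint.add hsq)
  rw [intervalIntegral.integral_add hint hsq] at hFTC
  have hsec_nonneg : 0 ≤ ∫ z in a..b, z * ⟪v'' z, v z⟫ := by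
    refine intervalIntegral.integral_nonneg_of_ae_restrict hab ?_
    filter_upwards [hsec, ae_restrict_mem measurableSet_Icc] with z hz hzab
    exact mul_nonneg (ha.trans hzab.1) hz
  linarith [sq_nonneg ‖v b‖]

end

theorem lintegral_Ioc_ofReal_eq_intervalIntegral {f : ℝ → ℝ} {a b : ℝ} (hab : a ≤ b)
    (hf : ContinuousOn f (Icc a b)) (hf_nonneg : ∀ z ∈ Ioc a b, 0 ≤ f z) :
    ∫⁻ z in Ioc a b, ENNReal.ofReal (f z) = ENNReal.ofReal (∫ z in a..b, f z) := by
  rw [intervalIntegral.integral_of_le hab, ofReal_integral_eq_lintegral_ofReal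
    (hf.integrableOn_Icc.mono_set Ioc_subset_Icc_self)
    ((ae_restrict_mem measurableSet_Ioc).mono hf_nonneg)]

theorem lintegral_Ioi_le_of_forall_Ioc {μ : Measure ℝ} {f B : ℝ → ENNReal} {a : ℝ} {C : ENNReal}
    (hf : AEMeasurable f (μ.restrict (Ioi a)))
    (hbound : ∀ ε T, a < ε → ε < T → ∫⁻ z in Ioc ε T, f z ∂μ ≤ B ε)
    (hB : Tendsto B (𝓝[>] a) (𝓝 C)) :
    ∫⁻ z in Ioi a, f z ∂μ ≤ C := by
  set l := 𝓝[>] a ×ˢ (atTop : Filter ℝ)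
  have hfst : Tendsto Prod.fst l (𝓝[>] a) := tendsto_fst
  have hcover : AECover (μ.restrict (Ioi a)) l fun p => Ioc p.1 p.2 :=
    (aecover_Ioi_of_Ioi (hfst.mono_right nhdsWithin_le_nhds)).inter (aecover_Iic tendsto_snd)
  refine le_of_tendsto_of_tendsto (hcover.lintegral_tendsto_of_countably_generated hf)
    (hB.comp hfst) ?_
  filter_upwards [hfst.eventually (Ioo_mem_nhdsGT (lt_add_one a)),
    tendsto_snd.eventually (eventually_gt_atTop (a + 1))] with p hp₁ hp₂
  calc ∫⁻ z in Ioc p.1 p.2, f z ∂μ.restrict (Ioi a)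
      ≤ ∫⁻ z in Ioc p.1 p.2, f z ∂μ := lintegral_mono' (Measure.restrict_mono le_rfl
        Measure.restrict_le_self) le_rfl
    _ ≤ B p.1 := hbound p.1 p.2 hp₁.1 (hp₁.2.trans hp₂)

theorem stmt19_general {H : Type*} [NormedAddCommGroup H] [InnerProductSpace ℝ H]
    (v : ℝ → H)
    (hv : ∀ z > (0:ℝ), DifferentiableAt ℝ v z)
    (hv' : ∀ z > (0:ℝ), DifferentiableAt ℝ (deriv v) z)
    (hcont : ContinuousOn v (Set.Ici (0:ℝ)))
    (hcont' : ContinuousOn (deriv v) (Set.Ici (0:ℝ)))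
    (hsec : ∀ᵐ z ∂(volume.restrict (Set.Ioi (0:ℝ))), ⟪deriv (deriv v) z, v z⟫ ≥ (0:ℝ))
    (hfirst : ∀ z ≥ (0:ℝ), ⟪deriv v z, v z⟫ ≤ 0)
    (hInt : ∀ ε T : ℝ, 0 < ε →
      IntervalIntegrable (fun z => z * ⟪deriv (deriv v) z, v z⟫) volume ε T) :
    (∀ ε T : ℝ, 0 < ε → ε < T →
      (∫ z in ε..T, z * ‖deriv v z‖ ^ 2) ≤
        T * ⟪deriv v T, v T⟫ - ε * ⟪deriv v ε, v ε⟫ + (1/2) * ‖v ε‖ ^ 2) ∧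
    (∫⁻ z in Set.Ioi (0:ℝ), ENNReal.ofReal (z * ‖deriv v z‖ ^ 2)) ≤
      ENNReal.ofReal ((1/2) * ‖v 0‖ ^ 2) := by
  have hfinite : ∀ ε T : ℝ, 0 < ε → ε < T → (∫ z in ε..T, z * ‖deriv v z‖ ^ 2) ≤
      T * ⟪deriv v T, v T⟫ - ε * ⟪deriv v ε, v ε⟫ + (1/2) * ‖v ε‖ ^ 2 := fun ε T hε hεT =>
    integral_mul_norm_sq_deriv_le hεT.le hε.le
      (fun z hz => (hv z (hε.trans_le hz.1)).hasDerivAt)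
      (fun z hz => (hv' z (hε.trans_le hz.1)).hasDerivAt) (hInt ε T hε)
      (ae_restrict_of_ae_restrict_of_subset (fun z hz => hε.trans_le hz.1) hsec)
  have hcont_sq : ContinuousOn (fun z => z * ‖deriv v z‖ ^ 2) (Ici 0) :=
    continuousOn_id.mul (hcont'.norm.pow 2)
  set B := fun ε => -(ε * ⟪deriv v ε, v ε⟫) + 1 / 2 * ‖v ε‖ ^ 2
  have hbound : ∀ ε T, 0 < ε → ε < T →
      ∫⁻ z in Ioc ε T, ENNReal.ofReal (z * ‖deriv v z‖ ^ 2) ≤ ENNReal.ofReal (B ε) := by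
    intro ε T hε hεT
    have hT : 0 ≤ T := hε.le.trans hεT.le
    rw [lintegral_Ioc_ofReal_eq_intervalIntegral hεT.le
      (hcont_sq.mono fun z hz => hε.le.trans hz.1)
      fun z hz => mul_nonneg (hε.le.trans hz.1.le) (sq_nonneg _)]
    refine ENNReal.ofReal_le_ofReal ?_
    simp only [B]
    linarith [hfinite ε T hε hεT, mul_nonpos_of_nonneg_of_nonpos hT (hfirst T hT)]
  have hB : Tendsto B (𝓝[>] 0) (𝓝 (1 / 2 * ‖v 0‖ ^ 2)) := by
    have hB_cont : ContinuousOn B (Ici 0) :=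
      (continuousOn_id.mul (hcont'.inner hcont)).neg.add (continuousOn_const.mul (hcont.norm.pow 2))
    simpa [B] using (hB_cont 0 self_mem_Ici).tendsto.mono_left
      (nhdsWithin_mono _ Ioi_subset_Ici_self)
  exact ⟨hfinite, lintegral_Ioi_le_of_forall_Ioc
    ((ENNReal.continuous_ofReal.comp_continuousOn (hcont_sq.mono Ioi_subset_Ici_self)).aemeasurable
      measurableSet_Ioi) hbound (ENNReal.tendsto_ofReal hB)⟩

/-- If `⟪v''(z), v(z)⟫ ≥ 0` a.e. on `(0,∞)`, `⟪v'(z), v(z)⟫ ≤ 0` for `z ≥ 0`, and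
`v, v'` are continuous on `[0,∞)` with `v` twice differentiable on `(0,∞)`, then
`∫_ε^T z‖v'(z)‖² dz ≤ T⟪v'(T), v(T)⟫ - ε⟪v'(ε), v(ε)⟫ + ½‖v(ε)‖²` for `0 < ε < T`,
and `∫_0^∞ z‖v'(z)‖² dz ≤ ½‖v(0)‖²`. -/
theorem stmt19 {H : Type*} [NormedAddCommGroup H] [InnerProductSpace ℝ H] [CompleteSpace H]
    (v : ℝ → H)
    (hv : ∀ z > (0:ℝ), DifferentiableAt ℝ v z)
    (hv' : ∀ z > (0:ℝ), DifferentiableAt ℝ (deriv v) z)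
    (hcont : ContinuousOn v (Set.Ici (0:ℝ)))
    (hcont' : ContinuousOn (deriv v) (Set.Ici (0:ℝ)))
    (hsec : ∀ᵐ z ∂(volume.restrict (Set.Ioi (0:ℝ))), ⟪deriv (deriv v) z, v z⟫ ≥ (0:ℝ))
    (hfirst : ∀ z ≥ (0:ℝ), ⟪deriv v z, v z⟫ ≤ 0)
    (hInt : ∀ ε T : ℝ, 0 < ε →
      IntervalIntegrable (fun z => z * ⟪deriv (deriv v) z, v z⟫) volume ε T) :
    (∀ ε T : ℝ, 0 < ε → ε < T →
      (∫ z in ε..T, z * ‖deriv v z‖ ^ 2) ≤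
        T * ⟪deriv v T, v T⟫ - ε * ⟪deriv v ε, v ε⟫ + (1/2) * ‖v ε‖ ^ 2) ∧
    (∫⁻ z in Set.Ioi (0:ℝ), ENNReal.ofReal (z * ‖deriv v z‖ ^ 2)) ≤
      ENNReal.ofReal ((1/2) * ‖v 0‖ ^ 2) :=
  stmt19_general v hv hv' hcont hcont' hsec hfirst hInt
end
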